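/- Flow lemma: for each ℓ ∈ ℕ, let p_ℓ be the uniform probability distribution on the box Λ_ℓ = [0,ℓ−1]^d ∩ ℤ^d and set q_ℓ = p_ℓ * p_ℓ (convolution), a probability distribution on Λ_{2ℓ−1}. Then there exist a constant C_d > 0 depending only on d and, for each ℓ, a flow Φ^ℓ on the nearest-neighbor graph of Λ_{2ℓ−1} connecting the Dirac measure δ₀ and q_ℓ — i.e. a function Φ^ℓ(x,y) defined on ordered nearest-neighbor pairs x ∼ y of Λ_{2ℓ−1} with Φ^ℓ(x,y) = −Φ^ℓ(y,x) and Σ_{z∼x} Φ^ℓ(x,z) = δ₀(x) − q_ℓ(x) for all x ∈ Λ_{2ℓ−1} — whose cost ‖Φ^ℓ‖² := (1/2) Σ_{x∼y} Φ^ℓ(x,y)² satisfies ‖Φ^ℓ‖² ≤ C_d g_d(ℓ), where g_d(ℓ) = ℓ if d = 1, g_d(ℓ) = log ℓ if d = 2, and g_d(ℓ) = 1 if d ≥ 3. -/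

import Mathlib

open Finset

/-- The box `Λ_ℓ = [0, ℓ-1]^d ∩ ℤ^d`. -/
noncomputable def boxZ (d ℓ : ℕ) : Finset (Fin d → ℤ) :=
  Fintype.piFinset fun _ => Finset.Icc 0 ((ℓ : ℤ) - 1)

/-- The `j`-th unit vector `e_j ∈ ℤ^d`. -/
def eZ (d : ℕ) (j : Fin d) : Fin d → ℤ := fun k => if k = j then 1 else 0

/-- The uniform probability distribution `p_ℓ` on `Λ_ℓ`. -/
noncomputable def punif (d ℓ : ℕ) (x : Fin d → ℤ) : ℝ :=
  if x ∈ boxZ d ℓ then ((ℓ : ℝ) ^ d)⁻¹ else 0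

/-- The convolution `q_ℓ = p_ℓ * p_ℓ`. -/
noncomputable def qconv (d ℓ : ℕ) (x : Fin d → ℤ) : ℝ :=
  ∑ y ∈ boxZ d ℓ, punif d ℓ y * punif d ℓ (x - y)

/-- `Φ` is a flow on the nearest-neighbour graph of `Λ_b` connecting `p` and `q`:
it is antisymmetric, supported on ordered nearest-neighbour pairs of `Λ_b`, and
its divergence at every vertex of `Λ_b` equals `p - q`. -/
def IsFlow (d b : ℕ) (Φ : (Fin d → ℤ) → (Fin d → ℤ) → ℝ)
    (p q : (Fin d → ℤ) → ℝ) : Prop :=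
  (∀ x y, Φ x y = - Φ y x) ∧
  (∀ x y, Φ x y ≠ 0 →
    x ∈ boxZ d b ∧ y ∈ boxZ d b ∧ ∃ j : Fin d, y = x + eZ d j ∨ y = x - eZ d j) ∧
  (∀ x ∈ boxZ d b, (∑ j : Fin d, (Φ x (x + eZ d j) + Φ x (x - eZ d j))) = p x - q x)

/-- The cost `‖Φ‖² = (1/2) Σ_{x∼y} Φ(x,y)²` of a flow on `Λ_b`. -/
noncomputable def flowCost (d b : ℕ) (Φ : (Fin d → ℤ) → (Fin d → ℤ) → ℝ) : ℝ :=
  (1/2) * ∑ x ∈ boxZ d b, ∑ j : Fin d, (Φ x (x + eZ d j) ^ 2 + Φ x (x - eZ d j) ^ 2)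

/-- `g_d(ℓ)`: `ℓ` if `d = 1`, `log ℓ` if `d = 2`, and `1` if `d ≥ 3`. -/
noncomputable def gScale (d ℓ : ℕ) : ℝ :=
  if d = 1 then (ℓ : ℝ) else if d = 2 then Real.log ℓ else 1

/-!
Write `q_ℓ = ν^{⊗d}`, where `ν = u_ℓ * u_ℓ` and `u_ℓ` is uniform on `[0, ℓ)` in `ℤ`, and pick `n`
with `2^n ≤ ℓ < 2^{n+1}`.
The measures `ν_k` = uniform on `[0, 2^k)` for `k ≤ n` and `ν_{n+1} = ν` interpolate between
`δ₀` and `ν`, with `ν_k ≤ 2 / 2^k` and `ν_k` supported in `[0, 2^{k+1})`. Pass from `ν_k^{⊗d}`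
to `ν_{k+1}^{⊗d}` one coordinate at a time: the `j`-th step changes a product measure only in
coordinate `j`, so it is the divergence of the one-dimensional cumulative flow in direction `j`
weighted by the other coordinates, and all steps telescope to `δ₀ - q_ℓ`.

The `k`-th stage carries flow at most `(2 / 2^k)^{d-1}` on a box of side `2^{k+2}`. Expanding the
square of the total flow and bounding the cross term of stages `k ≤ k'` through the support of
the smaller one gives a cost `≲ ∑_{k ≤ n} (4 / 2^d)^k`, which is `≲ 2^n ≤ ℓ`, `n ≲ log ℓ` or `1`
according as `d = 1`, `d = 2` or `d ≥ 3`.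
-/

namespace BoxFlow

open Function

lemma sum_le_sum_of_ne_zero_of_nonneg {α : Type*} {s t : Finset α} {f : α → ℝ}
    (hf : ∀ x ∈ t, 0 ≤ f x) (hst : ∀ x ∈ s, f x ≠ 0 → x ∈ t) :
    ∑ x ∈ s, f x ≤ ∑ x ∈ t, f x := by
  classical
  rw [← sum_filter_ne_zero]
  exact sum_le_sum_of_subset_of_nonneg (fun x hx => hst x (mem_filter.mp hx).1 (mem_filter.mp hx).2)
    fun x hx _ => hf x hx

noncomputable def cdf (f : ℤ → ℝ) (x : ℤ) : ℝ := ∑ a ∈ Icc 0 x, f a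

section Cdf

variable {f g : ℤ → ℝ} {B x : ℤ}

lemma cdf_of_neg (hx : x < 0) : cdf f x = 0 := by
  rw [cdf, Icc_eq_empty (by omega), sum_empty]

lemma cdf_sub_cdf_sub_one (hf : support f ⊆ Set.Ici 0) (x : ℤ) :
    cdf f x - cdf f (x - 1) = f x := by
  rcases lt_or_ge x 0 with hx | hx
  · have : f x = 0 := Function.notMem_support.mp fun h => (hf h).not_gt hx
    rw [cdf_of_neg hx, cdf_of_neg (by omega), this, sub_zero]
  · rw [cdf, cdf, show Icc 0 x = insert x (Icc 0 (x - 1)) by ext; simp; omega,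
      sum_insert (by simp)]
    ring

lemma cdf_nonneg (hf : 0 ≤ f) : 0 ≤ cdf f x := sum_nonneg fun a _ => hf a

lemma cdf_eq_finsum (hf : support f ⊆ Set.Icc 0 B) (hx : B ≤ x) :
    cdf f x = ∑ᶠ a, f a :=
  (finsum_eq_sum_of_support_subset f <| by
    rw [coe_Icc]; exact hf.trans (Set.Icc_subset_Icc_right hx)).symm

lemma cdf_le_finsum (hf0 : 0 ≤ f) (hf : support f ⊆ Set.Icc 0 B) :
    cdf f x ≤ ∑ᶠ a, f a := by
  rw [← cdf_eq_finsum hf (le_max_left B x)]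
  exact sum_le_sum_of_subset_of_nonneg (Icc_subset_Icc_right (le_max_right B x))
    fun a _ _ => hf0 a

lemma abs_cdf_sub_cdf_le_one (hf0 : 0 ≤ f) (hg0 : 0 ≤ g)
    (hf : support f ⊆ Set.Icc 0 B) (hg : support g ⊆ Set.Icc 0 B) (hf1 : ∑ᶠ a, f a = 1)
    (hg1 : ∑ᶠ a, g a = 1) :
    |cdf f x - cdf g x| ≤ 1 := by
  have := cdf_le_finsum (x := x) hf0 hf
  have := cdf_le_finsum (x := x) hg0 hg
  have := cdf_nonneg (x := x) hf0
  have := cdf_nonneg (x := x) hg0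
  rw [abs_le]
  constructor <;> linarith

end Cdf

noncomputable def unif (M : ℕ) (a : ℤ) : ℝ :=
  if a ∈ Icc 0 ((M : ℤ) - 1) then (M : ℝ)⁻¹ else 0

noncomputable def unifConv (ℓ : ℕ) (a : ℤ) : ℝ :=
  ∑ b ∈ Icc 0 ((ℓ : ℤ) - 1), unif ℓ b * unif ℓ (a - b)

section Uniform

variable {M ℓ : ℕ}

lemma unif_nonneg : 0 ≤ unif M := fun a => by unfold unif; split <;> positivity

lemma unif_le (a : ℤ) : unif M a ≤ (M : ℝ)⁻¹ := by
  unfold unif; split <;> first | rfl | positivity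

lemma support_unif : support (unif M) ⊆ Set.Icc 0 ((M : ℤ) - 1) := fun a ha => by
  by_contra h; exact ha (if_neg (by simpa using h))

lemma sum_unif (hM : M ≠ 0) : ∑ a ∈ Icc 0 ((M : ℤ) - 1), unif M a = 1 := by
  have h : ∀ a ∈ Icc 0 ((M : ℤ) - 1), unif M a = (M : ℝ)⁻¹ := fun a ha => if_pos ha
  rw [sum_congr rfl h, sum_const, Int.card_Icc, nsmul_eq_mul]
  rw [show ((M : ℤ) - 1 + 1 - 0).toNat = M by omega]
  exact mul_inv_cancel₀ (by exact_mod_cast hM)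

lemma finsum_unif (hM : M ≠ 0) : ∑ᶠ a, unif M a = 1 := by
  rw [finsum_eq_sum_of_support_subset _ (by rw [coe_Icc]; exact support_unif), sum_unif hM]

lemma unifConv_nonneg : 0 ≤ unifConv ℓ := fun _ =>
  sum_nonneg fun _ _ => mul_nonneg (unif_nonneg _) (unif_nonneg _)

lemma unifConv_le (hℓ : ℓ ≠ 0) (a : ℤ) : unifConv ℓ a ≤ (ℓ : ℝ)⁻¹ :=
  calc unifConv ℓ a ≤ ∑ b ∈ Icc 0 ((ℓ : ℤ) - 1), unif ℓ b * (ℓ : ℝ)⁻¹ :=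
        sum_le_sum fun b _ => mul_le_mul_of_nonneg_left (unif_le _) (unif_nonneg _)
    _ = (ℓ : ℝ)⁻¹ := by rw [← sum_mul, sum_unif hℓ, one_mul]

lemma support_unifConv : support (unifConv ℓ) ⊆ Set.Icc 0 (2 * ℓ - 2) :=
  fun a ha => by
  obtain ⟨b, -, hb⟩ := exists_ne_zero_of_sum_ne_zero ha
  have h1 := support_unif (left_ne_zero_of_mul hb)
  have h2 := support_unif (right_ne_zero_of_mul hb)
  simp only [Set.mem_Icc] at h1 h2 ⊢
  omega

lemma finsum_unifConv (hℓ : ℓ ≠ 0) : ∑ᶠ a, unifConv ℓ a = 1 := by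
  have hshift : ∀ b, ∑ᶠ a, unif ℓ (a - b) = 1 := fun b =>
    (finsum_comp_equiv (Equiv.subRight b)).trans (finsum_unif hℓ)
  simp only [unifConv]
  rw [finsum_sum_comm _ _ fun b _ => ?_]
  · simp_rw [← mul_finsum, hshift, mul_one, sum_unif hℓ]
  · exact ((Set.finite_Icc 0 ((ℓ : ℤ) - 1)).preimage sub_left_injective.injOn).subset
      fun a ha => support_unif (right_ne_zero_of_mul ha)

lemma qconv_eq_prod_unifConv {d : ℕ} (x : Fin d → ℤ) :
    qconv d ℓ x = ∏ i, unifConv ℓ (x i) := by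
  have hpunif : ∀ y, punif d ℓ y = ∏ i, unif ℓ (y i) := fun y => by
    by_cases hy : y ∈ boxZ d ℓ
    · have h : ∀ i ∈ univ, unif ℓ (y i) = (ℓ : ℝ)⁻¹ := fun i _ =>
        if_pos (Fintype.mem_piFinset.mp hy i)
      rw [punif, if_pos hy, prod_congr rfl h, prod_const, card_univ, Fintype.card_fin, inv_pow]
    · obtain ⟨i, hi⟩ := not_forall.mp (mt Fintype.mem_piFinset.mpr hy)
      rw [punif, if_neg hy, prod_eq_zero (mem_univ i) (if_neg hi)]
  simp only [qconv, hpunif, ← prod_mul_distrib]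
  exact (prod_univ_sum (fun _ => Icc 0 ((ℓ : ℤ) - 1))
    fun i b => unif ℓ b * unif ℓ (x i - b)).symm

end Uniform

noncomputable def stage (ℓ n k : ℕ) : ℤ → ℝ :=
  if k ≤ n then unif (2 ^ k) else unifConv ℓ

section Stage

variable {ℓ n : ℕ}

lemma stage_nonneg (k : ℕ) : 0 ≤ stage ℓ n k := by
  unfold stage; split
  exacts [unif_nonneg, unifConv_nonneg]

lemma support_stage (hn : 2 ^ n ≤ ℓ) (k : ℕ) :
    support (stage ℓ n k) ⊆ Set.Icc 0 (2 * ℓ - 2) := by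
  unfold stage; split_ifs with hk
  · refine support_unif.trans (Set.Icc_subset_Icc_right ?_)
    have : (2 : ℤ) ^ k ≤ ℓ := by exact_mod_cast (Nat.pow_le_pow_right two_pos hk).trans hn
    have : (0 : ℤ) < 2 ^ k := by positivity
    push_cast; omega
  · exact support_unifConv

lemma support_stage_subset_pow (hn : ℓ < 2 ^ (n + 1)) {k : ℕ} (hk : k ≤ n + 1) :
    support (stage ℓ n k) ⊆ Set.Icc 0 (2 ^ (k + 1) - 1) := by
  unfold stage; split_ifs with hkn
  · refine support_unif.trans (Set.Icc_subset_Icc_right ?_)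
    have : (0 : ℤ) < 2 ^ k := by positivity
    push_cast; rw [pow_succ]; omega
  · obtain rfl : k = n + 1 := by omega
    refine support_unifConv.trans (Set.Icc_subset_Icc_right ?_)
    have : (ℓ : ℤ) < 2 ^ (n + 1) := by exact_mod_cast hn
    rw [pow_succ _ (n + 1)]; omega

lemma finsum_stage (hn : 2 ^ n ≤ ℓ) (k : ℕ) : ∑ᶠ a, stage ℓ n k a = 1 := by
  unfold stage; split
  · exact finsum_unif (by positivity)
  · exact finsum_unifConv (by have := Nat.one_le_two_pow (n := n); omega)

lemma stage_le (hn : 2 ^ n ≤ ℓ) {k : ℕ} (hk : k ≤ n + 1) (a : ℤ) :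
    stage ℓ n k a ≤ 2 / 2 ^ k := by
  unfold stage; split_ifs with hkn
  · calc unif (2 ^ k) a ≤ ((2 ^ k : ℕ) : ℝ)⁻¹ := unif_le a
      _ ≤ 2 / 2 ^ k := by push_cast; rw [inv_eq_one_div]; gcongr; norm_num
  · obtain rfl : k = n + 1 := by omega
    have hℓ : ℓ ≠ 0 := by have := Nat.one_le_two_pow (n := n); omega
    calc unifConv ℓ a ≤ (ℓ : ℝ)⁻¹ := unifConv_le hℓ a
      _ ≤ ((2 : ℝ) ^ n)⁻¹ := inv_anti₀ (by positivity) (by exact_mod_cast hn)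
      _ = 2 / 2 ^ (n + 1) := by rw [pow_succ]; field_simp

lemma stage_zero : stage ℓ n 0 = fun a => if a = 0 then 1 else 0 := by
  funext a
  simp only [stage, zero_le, if_true, pow_zero, unif, Nat.cast_one, sub_self, Icc_self,
    mem_singleton, inv_one]

lemma stage_succ_self : stage ℓ n (n + 1) = unifConv ℓ := by simp [stage]

end Stage

section Hybrid

variable {d : ℕ} (ν : ℕ → ℤ → ℝ)

noncomputable def stageFlow (k : ℕ) (x : ℤ) : ℝ := cdf (ν k) x - cdf (ν (k + 1)) x

def hybridWeight (k : ℕ) (j : Fin d) (z : Fin d → ℤ) : ℝ :=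
  (∏ i ∈ Iio j, ν (k + 1) (z i)) * ∏ i ∈ Ioi j, ν k (z i)

noncomputable def edgeFlow (N : ℕ) (j : Fin d) (z : Fin d → ℤ) : ℝ :=
  ∑ k ∈ range N, hybridWeight ν k j z * stageFlow ν k (z j)

variable {ν}

lemma sum_hybridWeight_mul_sub (k : ℕ) (z : Fin d → ℤ) :
    ∑ j, hybridWeight ν k j z * (ν k (z j) - ν (k + 1) (z j)) =
      ∏ i, ν k (z i) - ∏ i, ν (k + 1) (z i) := by
  have := prod_add_ordered univ (fun i => ν k (z i)) fun i => ν (k + 1) (z i) - ν k (z i)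
  simp only [add_sub_cancel, filter_gt_eq_Iio, filter_lt_eq_Ioi] at this
  rw [this, sub_add_cancel_left, ← sum_neg_distrib]
  refine sum_congr rfl fun j _ => ?_
  rw [hybridWeight]
  ring

lemma hybridWeight_sub_eZ (k : ℕ) (j : Fin d) (z : Fin d → ℤ) :
    hybridWeight ν k j (z - eZ d j) = hybridWeight ν k j z := by
  have h : ∀ i ≠ j, (z - eZ d j) i = z i := fun i hi => by simp [eZ, hi]
  unfold hybridWeight
  congr 1 <;> refine prod_congr rfl fun i hi => congrArg _ (h i ?_)
  exacts [(mem_Iio.mp hi).ne, (mem_Ioi.mp hi).ne']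

lemma stageFlow_sub_stageFlow_sub_one (hν : ∀ k, support (ν k) ⊆ Set.Ici 0)
    (k : ℕ) (x : ℤ) : stageFlow ν k x - stageFlow ν k (x - 1) = ν k x - ν (k + 1) x := by
  rw [stageFlow, stageFlow, ← cdf_sub_cdf_sub_one (hν k) x,
    ← cdf_sub_cdf_sub_one (hν (k + 1)) x]
  ring

lemma sum_edgeFlow_sub_edgeFlow (hν : ∀ k, support (ν k) ⊆ Set.Ici 0) (N : ℕ)
    (z : Fin d → ℤ) :
    ∑ j, (edgeFlow ν N j z - edgeFlow ν N j (z - eZ d j)) =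
      ∏ i, ν 0 (z i) - ∏ i, ν N (z i) := by
  have hstep : ∀ j, edgeFlow ν N j z - edgeFlow ν N j (z - eZ d j) =
      ∑ k ∈ range N, hybridWeight ν k j z * (ν k (z j) - ν (k + 1) (z j)) := fun j => by
    rw [edgeFlow, edgeFlow, ← sum_sub_distrib]
    refine sum_congr rfl fun k _ => ?_
    rw [hybridWeight_sub_eZ, ← stageFlow_sub_stageFlow_sub_one hν, mul_sub,
      show (z - eZ d j) j = z j - 1 by simp [eZ]]
  simp only [hstep]
  rw [sum_comm]
  simp only [sum_hybridWeight_mul_sub]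
  exact sum_range_sub' (fun k => ∏ i, ν k (z i)) N

lemma abs_hybridWeight_le {s : ℝ} {k : ℕ} (h0 : ∀ a, |ν k a| ≤ s)
    (h1 : ∀ a, |ν (k + 1) a| ≤ s) (j : Fin d) (z : Fin d → ℤ) :
    |hybridWeight ν k j z| ≤ s ^ (d - 1) := by
  rw [hybridWeight, abs_mul, abs_prod, abs_prod]
  calc _ ≤ (∏ _i ∈ Iio j, s) * ∏ _i ∈ Ioi j, s :=
        mul_le_mul (prod_le_prod (fun _ _ => abs_nonneg _) fun _ _ => h1 _)
          (prod_le_prod (fun _ _ => abs_nonneg _) fun _ _ => h0 _)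
          (prod_nonneg fun _ _ => abs_nonneg _)
          (prod_nonneg fun _ _ => (abs_nonneg _).trans (h1 0))
    _ = s ^ (d - 1) := by
        rw [prod_const, prod_const, ← pow_add, Fin.card_Iio, Fin.card_Ioi]
        congr 1
        omega

lemma abs_stageFlow_le_one {B : ℤ} (hν0 : ∀ k, 0 ≤ ν k)
    (hν : ∀ k, support (ν k) ⊆ Set.Icc 0 B) (hmass : ∀ k, ∑ᶠ a, ν k a = 1)
    (k : ℕ) (x : ℤ) : |stageFlow ν k x| ≤ 1 :=
  abs_cdf_sub_cdf_le_one (hν0 k) (hν0 (k + 1)) (hν k) (hν (k + 1)) (hmass k) (hmass (k + 1))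

lemma mem_Icc_of_hybridWeight_mul_stageFlow_ne_zero {B : ℤ} {k : ℕ}
    (h0 : support (ν k) ⊆ Set.Icc 0 B) (h1 : support (ν (k + 1)) ⊆ Set.Icc 0 B)
    (hmass : ∑ᶠ a, ν k a = ∑ᶠ a, ν (k + 1) a) {j : Fin d} {z : Fin d → ℤ}
    (h : hybridWeight ν k j z * stageFlow ν k (z j) ≠ 0) :
    (∀ i, z i ∈ Set.Icc 0 B) ∧ z j < B := by
  have hW := left_ne_zero_of_mul h
  have hG := right_ne_zero_of_mul h
  have hj0 : 0 ≤ z j := by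
    by_contra! hj
    exact hG (by rw [stageFlow, cdf_of_neg hj, cdf_of_neg hj, sub_self])
  have hjB : z j < B := by
    by_contra! hj
    exact hG (by rw [stageFlow, cdf_eq_finsum h0 hj, cdf_eq_finsum h1 hj, hmass, sub_self])
  refine ⟨fun i => ?_, hjB⟩
  rw [hybridWeight, mul_ne_zero_iff, prod_ne_zero_iff, prod_ne_zero_iff] at hW
  rcases lt_trichotomy i j with hij | rfl | hij
  · exact h1 (hW.1 i (mem_Iio.mpr hij))
  · exact ⟨hj0, hjB.le⟩
  · exact h0 (hW.2 i (mem_Ioi.mpr hij))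

lemma mem_Icc_of_edgeFlow_ne_zero {B : ℤ} (hν : ∀ k, support (ν k) ⊆ Set.Icc 0 B)
    (hmass : ∀ k, ∑ᶠ a, ν k a = 1) {N : ℕ} {j : Fin d} {z : Fin d → ℤ}
    (h : edgeFlow ν N j z ≠ 0) : (∀ i, z i ∈ Set.Icc 0 B) ∧ z j < B := by
  obtain ⟨k, -, hk⟩ := exists_ne_zero_of_sum_ne_zero h
  exact mem_Icc_of_hybridWeight_mul_stageFlow_ne_zero (hν k) (hν (k + 1))
    ((hmass k).trans (hmass (k + 1)).symm) hk

end Hybrid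

section PairFlow

variable {d : ℕ}

lemma eZ_injective : Function.Injective (eZ d) := fun i j h => by
  simpa [eZ] using congrFun h i

lemma eZ_add_eZ_ne_zero (i j : Fin d) : eZ d i + eZ d j ≠ 0 := fun h => by
  have := congrFun h i
  simp only [eZ, Pi.add_apply, if_true, Pi.zero_apply] at this
  split_ifs at this <;> omega

noncomputable def pairFlow (F : Fin d → (Fin d → ℤ) → ℝ) (x y : Fin d → ℤ) : ℝ :=
  (∑ j, if y = x + eZ d j then F j x else 0) - ∑ j, if x = y + eZ d j then F j y else 0

variable {F : Fin d → (Fin d → ℤ) → ℝ}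

lemma pairFlow_add_eZ (x : Fin d → ℤ) (j : Fin d) : pairFlow F x (x + eZ d j) = F j x := by
  have h1 : ∀ i, x + eZ d j = x + eZ d i ↔ j = i := fun i => by
    rw [add_right_inj, eZ_injective.eq_iff]
  have h2 : ∀ i, x ≠ x + eZ d j + eZ d i := fun i h =>
    eZ_add_eZ_ne_zero j i (by rwa [add_assoc, left_eq_add] at h)
  simp only [pairFlow, h1, h2, if_false, sum_const_zero, sub_zero, sum_ite_eq, mem_univ, if_true]

lemma pairFlow_sub_eZ (x : Fin d → ℤ) (j : Fin d) :
    pairFlow F x (x - eZ d j) = -F j (x - eZ d j) := by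
  have h1 : ∀ i, x - eZ d j ≠ x + eZ d i := fun i h =>
    eZ_add_eZ_ne_zero i j (by rw [sub_eq_add_neg, add_right_inj] at h; rw [← h]; abel)
  have h2 : ∀ i, x = x - eZ d j + eZ d i ↔ j = i := fun i => by
    rw [sub_add_eq_add_sub, eq_sub_iff_add_eq, add_right_inj, eZ_injective.eq_iff]
  simp only [pairFlow, h1, h2, if_false, sum_const_zero, zero_sub, sum_ite_eq, mem_univ, if_true]

lemma isFlow_pairFlow {b : ℕ} {p q : (Fin d → ℤ) → ℝ}
    (hF : ∀ j z, F j z ≠ 0 → z ∈ boxZ d b ∧ z + eZ d j ∈ boxZ d b)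
    (hdiv : ∀ x ∈ boxZ d b, ∑ j, (F j x - F j (x - eZ d j)) = p x - q x) :
    IsFlow d b (pairFlow F) p q := by
  refine ⟨fun x y => by rw [pairFlow, pairFlow, neg_sub], fun x y hxy => ?_, fun x hx => ?_⟩
  · by_cases hout : (∑ j, if y = x + eZ d j then F j x else 0) ≠ 0
    · obtain ⟨j, -, hj⟩ := exists_ne_zero_of_sum_ne_zero hout
      obtain ⟨hy, hj⟩ := ite_ne_right_iff.mp hj
      exact ⟨(hF j x hj).1, hy ▸ (hF j x hj).2, j, Or.inl hy⟩
    · have hin : (∑ j, if x = y + eZ d j then F j y else 0) ≠ 0 := fun h =>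
        hxy (by rw [pairFlow, not_not.mp hout, h, sub_zero])
      obtain ⟨j, -, hj⟩ := exists_ne_zero_of_sum_ne_zero hin
      obtain ⟨hx, hj⟩ := ite_ne_right_iff.mp hj
      exact ⟨hx ▸ (hF j y hj).2, (hF j y hj).1, j, Or.inr (by rw [hx, add_sub_cancel_right])⟩
  · rw [← hdiv x hx]
    exact sum_congr rfl fun j _ => by rw [pairFlow_add_eZ, pairFlow_sub_eZ]; ring

lemma sum_sq_sub_le {α : Type*} [AddGroup α] {s : Finset α} {f : α → ℝ}
    (hf : ∀ z, f z ≠ 0 → z ∈ s) (v : α) : ∑ x ∈ s, f (x - v) ^ 2 ≤ ∑ x ∈ s, f x ^ 2 := by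
  have := sum_map s (Equiv.subRight v).toEmbedding fun y => f y ^ 2
  simp only [Equiv.coe_toEmbedding, Equiv.subRight_apply] at this
  rw [← this]
  exact sum_le_sum_of_ne_zero_of_nonneg (fun _ _ => sq_nonneg _) fun y _ hy =>
    hf y fun h => hy (by rw [h, sq, zero_mul])

lemma flowCost_pairFlow_le {b : ℕ} (hF : ∀ j z, F j z ≠ 0 → z ∈ boxZ d b) :
    flowCost d b (pairFlow F) ≤ ∑ j, ∑ x ∈ boxZ d b, F j x ^ 2 :=
  calc flowCost d b (pairFlow F)
      = 1 / 2 * ∑ j, (∑ x ∈ boxZ d b, F j x ^ 2 + ∑ x ∈ boxZ d b, F j (x - eZ d j) ^ 2) := by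
        simp only [flowCost, pairFlow_add_eZ, pairFlow_sub_eZ, neg_sq]
        rw [sum_comm]
        simp only [sum_add_distrib]
    _ ≤ 1 / 2 * ∑ j, (∑ x ∈ boxZ d b, F j x ^ 2 + ∑ x ∈ boxZ d b, F j x ^ 2) := by
        gcongr 1 / 2 * ∑ j, (_ + ?_) with j
        exact sum_sq_sub_le (hF j) _
    _ = ∑ j, ∑ x ∈ boxZ d b, F j x ^ 2 := by
        rw [mul_sum]
        exact sum_congr rfl fun j _ => by ring

end PairFlow

lemma sq_sum_le_two_mul_sum (b : ℕ → ℝ) (N : ℕ) :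
    (∑ k ∈ range N, b k) ^ 2 ≤ 2 * ∑ k' ∈ range N, b k' * ∑ k ∈ range (k' + 1), b k := by
  induction N with
  | zero => simp
  | succ N ih =>
    rw [sum_range_succ, sum_range_succ _ N, sum_range_succ b N]
    nlinarith [sq_nonneg (b N)]

lemma sum_abs_mul_abs_le {α : Type*} {s t : Finset α} {f g : α → ℝ} {a b : ℝ}
    (hf : ∀ x, f x ≠ 0 → x ∈ t) (hfa : ∀ x, |f x| ≤ a) (hgb : ∀ x, |g x| ≤ b) :
    ∑ x ∈ s, |f x| * |g x| ≤ #t * (a * b) :=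
  calc ∑ x ∈ s, |f x| * |g x| ≤ ∑ x ∈ t, |f x| * |g x| :=
        sum_le_sum_of_ne_zero_of_nonneg (fun _ _ => by positivity) fun x _ h =>
          hf x fun h' => h (by rw [h', abs_zero, zero_mul])
    _ ≤ #t * (a * b) := by
        rw [← nsmul_eq_mul]
        exact sum_le_card_nsmul _ _ _ fun x _ =>
          mul_le_mul (hfa x) (hgb x) (abs_nonneg _) ((abs_nonneg _).trans (hfa x))

-- (points of the box of side `2^{k+2}` carrying stage `k`) × (sup of stage `k`)
-- × (sup of stage `k'`)
noncomputable def pairBound (d k k' : ℕ) : ℝ :=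
  ((2 : ℝ) ^ (k + 2)) ^ d * ((2 / 2 ^ k) ^ (d - 1) * (2 / 2 ^ k') ^ (d - 1))

lemma sum_pairBound_le {d : ℕ} (hd : 1 ≤ d) (k' : ℕ) :
    ∑ k ∈ range (k' + 1), pairBound d k k' ≤ 2 ^ (4 * d - 1) * (4 / 2 ^ d) ^ k' := by
  obtain ⟨m, rfl⟩ : ∃ m, d = m + 1 := ⟨d - 1, by omega⟩
  have hy : (0 : ℝ) < 2 ^ k' := by positivity
  have hterm : ∀ k, pairBound (m + 1) k k' = 2 ^ (4 * m + 2) / (2 ^ k') ^ m * 2 ^ k := fun k => by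
    rw [pairBound, Nat.add_sub_cancel, div_pow, div_pow,
      show (2 : ℝ) ^ (k + 2) = 2 ^ k * 2 * 2 by ring]
    have hx : (0 : ℝ) < 2 ^ k := by positivity
    generalize (2 : ℝ) ^ k = x at *
    generalize (2 : ℝ) ^ k' = y at *
    field_simp
    rw [mul_pow, ← pow_mul, ← pow_mul]
    ring
  have hgeom : ∑ k ∈ range (k' + 1), (2 : ℝ) ^ k ≤ 2 ^ (k' + 1) := by
    rw [geom_sum_eq (by norm_num)]
    norm_num
  rw [sum_congr rfl fun k _ => hterm k, ← mul_sum]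
  calc _ ≤ (2 : ℝ) ^ (4 * m + 2) / (2 ^ k') ^ m * 2 ^ (k' + 1) := by gcongr
    _ = _ := by
      rw [show 4 * (m + 1) - 1 = 4 * m + 3 by omega, div_pow, pow_right_comm (2 : ℝ) (m + 1) k',
        show (4 : ℝ) = 2 ^ 2 by norm_num, pow_right_comm (2 : ℝ) 2 k', pow_succ 2 k']
      generalize (2 : ℝ) ^ k' = y at *
      field_simp
      ring

lemma mem_boxZ {d M : ℕ} {x : Fin d → ℤ} : x ∈ boxZ d M ↔ ∀ i, x i ∈ Set.Icc 0 ((M : ℤ) - 1) := by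
  simp [boxZ, Fintype.mem_piFinset]

section DyadicFlow

variable {d ℓ n : ℕ}

noncomputable def dyadicFlow (d ℓ n : ℕ) : (Fin d → ℤ) → (Fin d → ℤ) → ℝ :=
  pairFlow fun j => edgeFlow (stage ℓ n) (n + 1) j

lemma mem_boxZ_of_edgeFlow_stage_ne_zero (hn : 2 ^ n ≤ ℓ) {j : Fin d} {z : Fin d → ℤ}
    (h : edgeFlow (stage ℓ n) (n + 1) j z ≠ 0) :
    z ∈ boxZ d (2 * ℓ - 1) ∧ z + eZ d j ∈ boxZ d (2 * ℓ - 1) := by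
  obtain ⟨hz, hzj⟩ := mem_Icc_of_edgeFlow_ne_zero (support_stage hn) (finsum_stage hn) h
  have hcast : ((2 * ℓ - 1 : ℕ) : ℤ) - 1 = 2 * ℓ - 2 := by
    have := Nat.one_le_two_pow (n := n); omega
  refine ⟨mem_boxZ.mpr fun i => hcast ▸ hz i, mem_boxZ.mpr fun i => ?_⟩
  have := hz i
  rw [hcast]
  by_cases hij : i = j
  · subst hij; simp only [Pi.add_apply, eZ, if_true, Set.mem_Icc] at this ⊢; omega
  · simpa [eZ, hij] using this

lemma isFlow_dyadicFlow (hn : 2 ^ n ≤ ℓ) :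
    IsFlow d (2 * ℓ - 1) (dyadicFlow d ℓ n) (fun x => if x = 0 then 1 else 0) (qconv d ℓ) := by
  refine isFlow_pairFlow (fun j z => mem_boxZ_of_edgeFlow_stage_ne_zero hn) fun x _ => ?_
  rw [sum_edgeFlow_sub_edgeFlow (fun k => (support_stage hn k).trans Set.Icc_subset_Ici_self),
    stage_zero, stage_succ_self, qconv_eq_prod_unifConv, Fintype.prod_ite_zero, prod_const_one]
  congr 1
  simp only [funext_iff, Pi.zero_apply]
  congr

lemma abs_hybridWeight_mul_stageFlow_le (hn : 2 ^ n ≤ ℓ) {k : ℕ} (hk : k ≤ n) (j : Fin d)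
    (z : Fin d → ℤ) :
    |hybridWeight (stage ℓ n) k j z * stageFlow (stage ℓ n) k (z j)| ≤ (2 / 2 ^ k) ^ (d - 1) := by
  have hle : ∀ {k'}, k ≤ k' → k' ≤ n + 1 → ∀ a, |stage ℓ n k' a| ≤ 2 / 2 ^ k :=
    fun hkk' hk' a => by
      rw [abs_of_nonneg (stage_nonneg _ a)]
      exact (stage_le hn hk' a).trans
        (div_le_div_of_nonneg_left zero_le_two (by positivity) (pow_le_pow_right₀ one_le_two hkk'))
  rw [abs_mul, ← mul_one ((2 / 2 ^ k : ℝ) ^ (d - 1))]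
  exact mul_le_mul (abs_hybridWeight_le (hle le_rfl (by omega)) (hle (by omega) (by omega)) j z)
    (abs_stageFlow_le_one stage_nonneg (support_stage hn) (finsum_stage hn) k _) (abs_nonneg _)
    (by positivity)

lemma mem_boxZ_of_hybridWeight_mul_stageFlow_ne_zero (hn1 : 2 ^ n ≤ ℓ) (hn2 : ℓ < 2 ^ (n + 1))
    {k : ℕ} (hk : k ≤ n) {j : Fin d} {z : Fin d → ℤ}
    (h : hybridWeight (stage ℓ n) k j z * stageFlow (stage ℓ n) k (z j) ≠ 0) :
    z ∈ boxZ d (2 ^ (k + 2)) := by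
  have hmono : Set.Icc (0 : ℤ) (2 ^ (k + 1) - 1) ⊆ Set.Icc 0 (2 ^ (k + 2) - 1) :=
    Set.Icc_subset_Icc_right (by gcongr <;> omega)
  obtain ⟨hz, -⟩ := mem_Icc_of_hybridWeight_mul_stageFlow_ne_zero
    ((support_stage_subset_pow hn2 (by omega)).trans hmono)
    (support_stage_subset_pow hn2 (by omega))
    ((finsum_stage hn1 k).trans (finsum_stage hn1 (k + 1)).symm) h
  exact mem_boxZ.mpr fun i => by push_cast; exact hz i

lemma card_boxZ (d M : ℕ) : #(boxZ d M) = M ^ d := by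
  simp [boxZ, Fintype.card_piFinset, Int.card_Icc]

lemma sum_abs_mul_abs_le_pairBound (hn1 : 2 ^ n ≤ ℓ) (hn2 : ℓ < 2 ^ (n + 1)) {k k' : ℕ}
    (hk : k ≤ k') (hk' : k' ≤ n) (j : Fin d) (s : Finset (Fin d → ℤ)) :
    ∑ x ∈ s, |hybridWeight (stage ℓ n) k j x * stageFlow (stage ℓ n) k (x j)| *
      |hybridWeight (stage ℓ n) k' j x * stageFlow (stage ℓ n) k' (x j)| ≤ pairBound d k k' := by
  have := sum_abs_mul_abs_le (s := s)
    (fun x => mem_boxZ_of_hybridWeight_mul_stageFlow_ne_zero hn1 hn2 (hk.trans hk') (z := x))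
    (abs_hybridWeight_mul_stageFlow_le hn1 (hk.trans hk') j)
    (abs_hybridWeight_mul_stageFlow_le hn1 hk' j)
  rwa [card_boxZ, Nat.cast_pow, Nat.cast_pow, Nat.cast_ofNat] at this

lemma sum_sq_edgeFlow_stage_le (hd : 1 ≤ d) (hn1 : 2 ^ n ≤ ℓ) (hn2 : ℓ < 2 ^ (n + 1))
    (j : Fin d) (s : Finset (Fin d → ℤ)) :
    ∑ x ∈ s, edgeFlow (stage ℓ n) (n + 1) j x ^ 2 ≤
      2 ^ (4 * d) * ∑ k ∈ range (n + 1), (4 / 2 ^ d : ℝ) ^ k := by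
  set A : ℕ → (Fin d → ℤ) → ℝ := fun k x =>
    hybridWeight (stage ℓ n) k j x * stageFlow (stage ℓ n) k (x j)
  calc ∑ x ∈ s, edgeFlow (stage ℓ n) (n + 1) j x ^ 2
      ≤ ∑ x ∈ s, (∑ k ∈ range (n + 1), |A k x|) ^ 2 := sum_le_sum fun x _ => by
        rw [← sq_abs]
        exact pow_le_pow_left₀ (abs_nonneg _) (abs_sum_le_sum_abs _ _) 2
    _ ≤ ∑ x ∈ s, 2 * ∑ k' ∈ range (n + 1), |A k' x| * ∑ k ∈ range (k' + 1), |A k x| :=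
        sum_le_sum fun x _ => sq_sum_le_two_mul_sum _ _
    _ = 2 * ∑ k' ∈ range (n + 1), ∑ k ∈ range (k' + 1), ∑ x ∈ s, |A k x| * |A k' x| := by
        rw [← mul_sum]
        congr 1
        simp_rw [mul_sum]
        rw [sum_comm]
        refine sum_congr rfl fun k' _ => ?_
        rw [sum_comm]
        exact sum_congr rfl fun k _ => sum_congr rfl fun x _ => mul_comm _ _
    _ ≤ 2 * ∑ k' ∈ range (n + 1), ∑ k ∈ range (k' + 1), pairBound d k k' := by
        gcongr with k' hk' k hk
        exact sum_abs_mul_abs_le_pairBound hn1 hn2 (Nat.lt_succ_iff.mp (mem_range.mp hk))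
          (Nat.lt_succ_iff.mp (mem_range.mp hk')) j s
    _ ≤ 2 * ∑ k' ∈ range (n + 1), 2 ^ (4 * d - 1) * (4 / 2 ^ d : ℝ) ^ k' := by
        gcongr with k' hk'
        exact sum_pairBound_le hd k'
    _ = _ := by rw [← mul_sum, ← mul_assoc, ← pow_succ', Nat.sub_add_cancel (by omega)]

lemma flowCost_dyadicFlow_le (hd : 1 ≤ d) (hn1 : 2 ^ n ≤ ℓ) (hn2 : ℓ < 2 ^ (n + 1)) :
    flowCost d (2 * ℓ - 1) (dyadicFlow d ℓ n) ≤
      d * 2 ^ (4 * d) * ∑ k ∈ range (n + 1), (4 / 2 ^ d : ℝ) ^ k :=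
  calc flowCost d (2 * ℓ - 1) (dyadicFlow d ℓ n)
      ≤ ∑ j : Fin d, ∑ x ∈ boxZ d (2 * ℓ - 1), edgeFlow (stage ℓ n) (n + 1) j x ^ 2 :=
        flowCost_pairFlow_le fun _ _ h => (mem_boxZ_of_edgeFlow_stage_ne_zero hn1 h).1
    _ ≤ ∑ _j : Fin d, 2 ^ (4 * d) * ∑ k ∈ range (n + 1), (4 / 2 ^ d : ℝ) ^ k :=
        sum_le_sum fun j _ => sum_sq_edgeFlow_stage_le hd hn1 hn2 j _
    _ = _ := by rw [sum_const, card_univ, Fintype.card_fin, nsmul_eq_mul, mul_assoc]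

lemma unifConv_one : unifConv 1 = unif 1 := by
  funext a
  simp [unifConv, unif]

lemma dyadicFlow_one : dyadicFlow d 1 0 = 0 := by
  have : stageFlow (stage 1 0) 0 = 0 := by
    funext x
    rw [stageFlow, stage_succ_self, unifConv_one, stage, if_pos le_rfl, pow_zero, sub_self,
      Pi.zero_apply]
  funext x y
  simp [dyadicFlow, pairFlow, edgeFlow, this]

end DyadicFlow

lemma geom_sum_le_gScale {d ℓ n : ℕ} (hd : 1 ≤ d) (hℓ : 2 ≤ ℓ) (hn1 : 2 ^ n ≤ ℓ)
    (hn2 : ℓ < 2 ^ (n + 1)) : ∑ k ∈ range (n + 1), (4 / 2 ^ d : ℝ) ^ k ≤ 3 * gScale d ℓ := by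
  rcases (show d = 1 ∨ d = 2 ∨ 3 ≤ d by omega) with rfl | rfl | hd3
  · rw [gScale, if_pos rfl, show (4 / 2 ^ 1 : ℝ) = 2 by norm_num, geom_sum_eq (by norm_num),
      pow_succ, show (2 : ℝ) - 1 = 1 by norm_num, div_one]
    have : (2 : ℝ) ^ n ≤ ℓ := by exact_mod_cast hn1
    linarith
  · have hn : (1 : ℝ) ≤ n := by
      have : n ≠ 0 := by rintro rfl; omega
      exact_mod_cast Nat.one_le_iff_ne_zero.mpr this
    have hlog : n * Real.log 2 ≤ Real.log ℓ := by
      rw [← Real.log_pow]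
      exact Real.log_le_log (by positivity) (by exact_mod_cast hn1)
    rw [gScale, if_neg (by norm_num), if_pos rfl]
    calc ∑ k ∈ range (n + 1), (4 / 2 ^ 2 : ℝ) ^ k = n + 1 := by norm_num
      _ ≤ 3 * (n * Real.log 2) := by nlinarith [Real.log_two_gt_d9]
      _ ≤ 3 * Real.log ℓ := by gcongr
  · rw [gScale, if_neg (by omega), if_neg (by omega), mul_one]
    have hratio : (4 / 2 ^ d : ℝ) ≤ 1 / 2 := by
      rw [div_le_div_iff₀ (by positivity) two_pos]
      calc (4 : ℝ) * 2 = 2 ^ 3 := by norm_num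
        _ ≤ 2 ^ d := pow_le_pow_right₀ one_le_two hd3
        _ = 1 * 2 ^ d := (one_mul _).symm
    calc ∑ k ∈ range (n + 1), (4 / 2 ^ d : ℝ) ^ k ≤ ∑ k ∈ range (n + 1), (1 / 2 : ℝ) ^ k :=
          sum_le_sum fun k _ => pow_le_pow_left₀ (by positivity) hratio k
      _ ≤ 2 := sum_geometric_two_le _
      _ ≤ 3 := by norm_num

end BoxFlow

open BoxFlow

/-- Lemma 3.2 (Flow lemma): there is a constant `C_d > 0` such that for every `ℓ` there is a
flow `Φ^ℓ` on `Λ_{2ℓ-1}` connecting the Dirac measure `δ₀` and `q_ℓ = p_ℓ * p_ℓ` with cost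
`‖Φ^ℓ‖² ≤ C_d g_d(ℓ)`. -/
theorem flow_lemma (d : ℕ) (hd : 1 ≤ d) :
    ∃ C : ℝ, 0 < C ∧ ∀ ℓ : ℕ, 1 ≤ ℓ →
      ∃ Φ : (Fin d → ℤ) → (Fin d → ℤ) → ℝ,
        IsFlow d (2 * ℓ - 1) Φ (fun x => if x = 0 then 1 else 0) (qconv d ℓ) ∧
        flowCost d (2 * ℓ - 1) Φ ≤ C * gScale d ℓ := by
  refine ⟨d * 2 ^ (4 * d) * 3, by positivity, fun ℓ hℓ => ?_⟩
  obtain ⟨n, hn1, hn2⟩ : ∃ n, 2 ^ n ≤ ℓ ∧ ℓ < 2 ^ (n + 1) :=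
    ⟨Nat.log 2 ℓ, Nat.pow_log_le_self 2 (by omega), Nat.lt_pow_succ_log_self one_lt_two ℓ⟩
  refine ⟨dyadicFlow d ℓ n, isFlow_dyadicFlow hn1, ?_⟩
  rcases hℓ.eq_or_lt with rfl | hℓ
  · obtain rfl : n = 0 := by
      by_contra h
      have := Nat.one_lt_two_pow h
      omega
    -- here `q_1 = δ₀` and the flow vanishes, while `g_2(1) = log 1 = 0`
    have hg : 0 ≤ gScale d 1 := by unfold gScale; split_ifs <;> simp
    calc flowCost d (2 * 1 - 1) (dyadicFlow d 1 0) = 0 := by simp [dyadicFlow_one, flowCost]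
      _ ≤ _ := mul_nonneg (by positivity) hg
  · calc flowCost d (2 * ℓ - 1) (dyadicFlow d ℓ n)
        ≤ d * 2 ^ (4 * d) * ∑ k ∈ range (n + 1), (4 / 2 ^ d : ℝ) ^ k :=
          flowCost_dyadicFlow_le hd hn1 hn2
      _ ≤ d * 2 ^ (4 * d) * (3 * gScale d ℓ) := by
          gcongr
          exact geom_sum_le_gScale hd hℓ hn1 hn2
      _ = _ := by ring
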